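/- Let $u,v$ be positive integers and let $A$ be a $u\times v$ matrix with rational entries such that no row of $A$ is identically zero and there is a positive rational $c$ such that the first nonzero entry of every row of $A$ equals $c$. Then $A$ is doubly image partition regular. -/

import Mathlib

/-!
Clearing denominators gives `D > 0` and an integer matrix `Z = D • A` whose rows all have first
nonzero entry `c₀ = D * c > 0`. Stacking the rows of `c₀ • 1` on top of `Z` keeps this property,
and if all entries of the stacked matrix times `x` have one colour for the colouring
`n ↦ (φ (D * (n / c₀)), φ n)`, then `D • x` and `Z *ᵥ x = A *ᵥ (D • x)` are both monochromatic.

Integer matrices whose rows have a common positive first entry `c` are image partition regular.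
By induction on the number of columns, using van der Waerden's theorem with bounds uniform in the
colouring (a consequence of Hales–Jewett), one finds `x` such that for each `t` all combinations
`c * x t + ∑ s > t, λ s * x s` with `|λ s| ≤ p` are positive and share a colour depending on `t`;
running this with `|κ| * m + 1` columns and keeping `m` of them with the same colour removes the
dependence on `t`.
-/

open Matrix

/-- `A` is doubly image partition regular: for every finite colouring of the
positive integers there is `x` with positive integer entries, monochromatic,
such that the entries of `A *ᵥ x` are positive integers which are
monochromatic (possibly of another colour). -/
def DoublyIPR {u v : ℕ} (A : Matrix (Fin u) (Fin v) ℚ) : Prop :=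
  ∀ (r : ℕ) (φ : ℕ → Fin r), ∃ x : Fin v → ℕ,
    (∀ i, 0 < x i) ∧ (∀ i j, φ (x i) = φ (x j)) ∧
    ∃ y : Fin u → ℕ, (∀ i, 0 < y i) ∧
      (∀ i, (y i : ℚ) = A.mulVec (fun j => (x j : ℚ)) i) ∧
      ∀ i j, φ (y i) = φ (y j)

open Finset Combinatorics

theorem Combinatorics.Line.sum_coe_apply {ι : Type*} [Fintype ι] {K : ℕ}
    (l : Line (Fin (K + 1)) ι) (x : Fin (K + 1)) :
    ∑ i, (l x i : ℕ) = #{i | l.idxFun i = none} * x + ∑ i, (l 0 i : ℕ) := by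
  have h : ∀ i, (l x i : ℕ) = (if l.idxFun i = none then (x : ℕ) else 0) + l 0 i := by
    intro i
    cases hi : l.idxFun i <;> simp [hi]
  rw [sum_congr rfl fun i _ => h i, sum_add_distrib, sum_ite, sum_const_zero, add_zero,
    sum_const, smul_eq_mul]

theorem exists_bounded_mono_arithProg (κ : Type*) [Finite κ] (K : ℕ) :
    ∃ M : ℕ, ∀ φ : ℕ → κ, ∃ a b : ℕ, 0 < a ∧ a ≤ M ∧ b ≤ M ∧
      ∃ k, ∀ s ≤ K, φ (a * s + b) = k := by
  obtain ⟨ι, _, hι⟩ := Line.exists_mono_in_high_dimension (Fin (K + 1)) κ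
  refine ⟨Fintype.card ι * K + Fintype.card ι, fun φ => ?_⟩
  obtain ⟨l, k, hl⟩ := hι fun v => φ (∑ i, (v i : ℕ))
  refine ⟨#{i | l.idxFun i = none}, ∑ i, (l 0 i : ℕ), ?_, ?_, ?_, k, fun s hs => ?_⟩
  · exact card_pos.mpr ⟨l.proper.choose, by simpa using l.proper.choose_spec⟩
  · exact (card_le_univ _).trans (Nat.le_add_left _ _)
  · calc ∑ i, (l 0 i : ℕ) ≤ ∑ _i : ι, K := sum_le_sum fun i _ => Fin.is_le _
      _ ≤ _ := by simp
  · have h := hl ⟨s, Nat.lt_succ_of_le hs⟩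
    beta_reduce at h
    rwa [Line.sum_coe_apply] at h

def HasFirstEntry {m : ℕ} (r : Fin m → ℤ) (t : Fin m) (c : ℤ) : Prop :=
  r t = c ∧ ∀ s < t, r s = 0

theorem HasFirstEntry.tail {m : ℕ} {r : Fin (m + 1) → ℤ} {t : Fin m} {c : ℤ}
    (h : HasFirstEntry r t.succ c) : r 0 = 0 ∧ HasFirstEntry (vecTail r) t c :=
  ⟨h.2 0 t.succ_pos, h.1, fun s hs => h.2 s.succ (Fin.succ_lt_succ_iff.mpr hs)⟩

theorem abs_dotProduct_le {n : Type*} [Fintype n] {r y : n → ℤ} {p N : ℤ}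
    (hr : ∀ s, |r s| ≤ p) (hy : ∀ s, |y s| ≤ N) : |r ⬝ᵥ y| ≤ Fintype.card n * (p * N) := by
  calc |r ⬝ᵥ y| ≤ ∑ s, |r s| * |y s| := by
        simpa only [dotProduct, abs_mul] using Finset.abs_sum_le_sum_abs (fun s => r s * y s) _
    _ ≤ ∑ _s : n, p * N := Finset.sum_le_sum fun s _ =>
        mul_le_mul (hr s) (hy s) (abs_nonneg _) ((abs_nonneg _).trans (hr s))
    _ = Fintype.card n * (p * N) := by simp

theorem exists_dotProduct_vecCons_eq {m p N₀ J a b c : ℕ} (hJ : m * p * N₀ < J)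
    {r : Fin (m + 1) → ℤ} {y : Fin m → ℤ} (hr0 : r 0 = c) (hr : ∀ s, |r s| ≤ p)
    (hy : ∀ s, 0 < y s ∧ y s ≤ N₀) :
    ∃ j : ℕ, 1 ≤ j ∧ j ≤ 2 * J ∧
      r ⬝ᵥ vecCons (a * J + b : ℤ) ((c * a : ℤ) • y) = ((c * (a * j + b) : ℕ) : ℤ) := by
  have hT : |vecTail r ⬝ᵥ y| ≤ m * (p * N₀) := by
    simpa using abs_dotProduct_le (r := vecTail r) (fun s => hr s.succ)
      fun s => (abs_of_pos (hy s).1).trans_le (hy s).2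
  have hJ' : (m * (p * N₀) : ℤ) < J := by rw [← mul_assoc]; exact_mod_cast hJ
  obtain ⟨j, hj⟩ : ∃ j : ℕ, (J : ℤ) + vecTail r ⬝ᵥ y = j :=
    Int.eq_ofNat_of_zero_le (by linarith [abs_le.mp hT])
  refine ⟨j, by linarith [abs_le.mp hT], by linarith [abs_le.mp hT], ?_⟩
  rw [dotProduct_cons, dotProduct_smul, vecHead, hr0]
  push_cast
  rw [← hj, smul_eq_mul]
  ring

/-- The bound `N`, uniform in the colouring, drives the induction on `m`: the length of the
progression needed at level `0` depends on the bound for the remaining levels. -/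
def LevelwiseMono (κ : Type*) (c p N m : ℕ) : Prop :=
  ∀ φ : ℤ → κ, ∃ x : Fin m → ℤ, ∃ k : Fin m → κ, (∀ t, 0 < x t ∧ x t ≤ N) ∧
    ∀ t r, HasFirstEntry r t c → (∀ s, |r s| ≤ p) →
      0 < r ⬝ᵥ x ∧ r ⬝ᵥ x ≤ N ∧ φ (r ⬝ᵥ x) = k t

theorem LevelwiseMono.succ {κ : Type*} [Finite κ] {c p N₀ m : ℕ} (hc : 0 < c)
    (h : LevelwiseMono κ c p N₀ m) : ∃ N, LevelwiseMono κ c p N (m + 1) := by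
  set J := m * p * N₀ + 1
  obtain ⟨M, hM⟩ := exists_bounded_mono_arithProg κ (2 * J)
  set N := c * M * (2 * J + 1 + N₀)
  refine ⟨N, fun φ => ?_⟩
  obtain ⟨a, b, ha, haM, hbM, k₀, hk₀⟩ := hM fun n => φ (c * n)
  obtain ⟨y, k, hy, hyk⟩ := h fun n => φ (c * a * n)
  have hprog : ∀ s ≤ 2 * J, c * (a * s + b) ≤ N := fun s hs =>
    calc c * (a * s + b) ≤ c * (M * (2 * J) + M) := by gcongr
      _ ≤ N := by unfold N; rw [mul_assoc]; gcongr; nlinarith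
  have hcaN₀ : c * a * N₀ ≤ N := by unfold N; gcongr; omega
  -- Level-`0` combinations are `c * (a * j + b)` with `1 ≤ j ≤ 2 * J`; higher levels are those
  -- of `y` dilated by `c * a`, which is why `y` was chosen for the colouring `φ (c * a * ·)`.
  refine ⟨vecCons (a * J + b : ℤ) ((c * a : ℤ) • y), Fin.cons k₀ k, fun t => ?_, ?_⟩
  · cases t using Fin.cases with
    | zero =>
      have := hprog J (by omega)
      simp only [cons_val_zero]
      constructor
      · positivity
      · exact_mod_cast (Nat.le_mul_of_pos_left _ hc).trans this
    | succ t =>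
      simp only [cons_val_succ, Pi.smul_apply, smul_eq_mul]
      refine ⟨by have := (hy t).1; positivity, ?_⟩
      calc (c * a : ℤ) * y t ≤ c * a * N₀ := by gcongr; exact (hy t).2
        _ ≤ N := by exact_mod_cast hcaN₀
  · intro t r ht hr
    cases t using Fin.cases with
    | zero =>
      obtain ⟨j, hj1, hj2, hrx⟩ := exists_dotProduct_vecCons_eq (a := a) (b := b)
        (Nat.lt_succ_self _) ht.1 hr hy
      rw [hrx]
      refine ⟨by positivity, by exact_mod_cast hprog j hj2, ?_⟩
      simpa using hk₀ j hj2
    | succ t =>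
      obtain ⟨hr0, hrt⟩ := ht.tail
      have hrx : r ⬝ᵥ vecCons (a * J + b : ℤ) ((c * a : ℤ) • y) = c * a * (vecTail r ⬝ᵥ y) := by
        rw [dotProduct_cons, dotProduct_smul]
        simp [vecHead, hr0]
      obtain ⟨h1, h2, h3⟩ := hyk t (vecTail r) hrt fun s => hr s.succ
      rw [hrx]
      refine ⟨by positivity, ?_, by simpa using h3⟩
      calc (c * a : ℤ) * (vecTail r ⬝ᵥ y) ≤ c * a * N₀ := by gcongr
        _ ≤ N := by exact_mod_cast hcaN₀

theorem exists_levelwiseMono (κ : Type*) [Finite κ] {c : ℕ} (hc : 0 < c) (p m : ℕ) :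
    ∃ N, LevelwiseMono κ c p N m := by
  induction m with
  | zero => exact ⟨0, fun _ => ⟨Fin.elim0, Fin.elim0, fun t => t.elim0, fun t => t.elim0⟩⟩
  | succ m ih => exact ih.elim fun _ h => h.succ hc

theorem HasFirstEntry.extend {m n : ℕ} {r : Fin m → ℤ} {t : Fin m} {c : ℤ}
    (h : HasFirstEntry r t c) (g : Fin m ↪o Fin n) :
    HasFirstEntry (Function.extend g r 0) (g t) c := by
  refine ⟨by rw [g.injective.extend_apply, h.1], fun s hs => ?_⟩
  by_cases hs' : ∃ u, g u = s
  · obtain ⟨u, rfl⟩ := hs'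
    rw [g.injective.extend_apply, h.2 u (g.lt_iff_lt.mp hs)]
  · rw [Function.extend_apply' _ _ _ hs', Pi.zero_apply]

theorem extend_dotProduct {m n : Type*} [Fintype m] [Fintype n] {g : m → n}
    (hg : g.Injective) (r : m → ℤ) (x : n → ℤ) :
    Function.extend g r 0 ⬝ᵥ x = r ⬝ᵥ (x ∘ g) :=
  (Fintype.sum_of_injective g hg _ _
    (fun _ hs => by rw [Function.extend_apply' _ _ _ hs, Pi.zero_apply, zero_mul])
    fun u => by rw [Function.comp_apply, hg.extend_apply]).symm

theorem exists_mono_dotProduct_of_hasFirstEntry (κ : Type*) [Finite κ] {c : ℕ} (hc : 0 < c)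
    (p m : ℕ) (φ : ℤ → κ) :
    ∃ x : Fin m → ℤ, (∀ t, 0 < x t) ∧ ∃ k, ∀ t r, HasFirstEntry r t c → (∀ s, |r s| ≤ p) →
      0 < r ⬝ᵥ x ∧ φ (r ⬝ᵥ x) = k := by
  classical
  have := Fintype.ofFinite κ
  obtain ⟨N, hN⟩ := exists_levelwiseMono κ hc p (Fintype.card κ * m + 1)
  obtain ⟨x, k, hx, hxk⟩ := hN φ
  obtain ⟨k₀, hk₀⟩ := Fintype.exists_lt_card_fiber_of_mul_lt_card k (n := m) (by simp)
  let g := Finset.orderEmbOfCardLe _ hk₀.le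
  have hg : ∀ t, k (g t) = k₀ := fun t => by
    simpa using Finset.orderEmbOfCardLe_mem _ hk₀.le t
  refine ⟨x ∘ g, fun t => (hx (g t)).1, k₀, fun t r ht hr => ?_⟩
  have hr' : ∀ s, |Function.extend g r 0 s| ≤ p := fun s => by
    by_cases hs : ∃ u, g u = s
    · obtain ⟨u, rfl⟩ := hs
      rw [g.injective.extend_apply]; exact hr u
    · rw [Function.extend_apply' _ _ _ hs]; simp
  obtain ⟨h1, -, h3⟩ := hxk (g t) _ (ht.extend g) hr'
  rw [extend_dotProduct g.injective] at h1 h3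
  exact ⟨h1, h3.trans (hg t)⟩

theorem Matrix.exists_pos_mono_mulVec_of_hasFirstEntry {ι : Type*} [Finite ι] {v : ℕ}
    (C : Matrix ι (Fin v) ℤ) {c : ℤ} (hc : 0 < c) (hC : ∀ i, ∃ t, HasFirstEntry (C i) t c)
    {κ : Type*} [Finite κ] (φ : ℤ → κ) :
    ∃ x : Fin v → ℤ, (∀ j, 0 < x j) ∧ ∃ k, ∀ i, 0 < (C *ᵥ x) i ∧ φ ((C *ᵥ x) i) = k := by
  lift c to ℕ using hc.le
  obtain ⟨p, hp⟩ := Finite.exists_le fun ij : ι × Fin v => (C ij.1 ij.2).natAbs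
  obtain ⟨x, hx, k, hxk⟩ := exists_mono_dotProduct_of_hasFirstEntry κ (by exact_mod_cast hc) p v φ
  refine ⟨x, hx, k, fun i => ?_⟩
  obtain ⟨t, ht⟩ := hC i
  exact hxk t (C i) ht fun j => by
    rw [Int.abs_eq_natAbs]; exact_mod_cast hp (i, j)

theorem Matrix.exists_doubly_mono_of_hasFirstEntry {ι : Type*} [Finite ι] {v : ℕ}
    (Z : Matrix ι (Fin v) ℤ) {c : ℤ} (hc : 0 < c) (hZ : ∀ i, ∃ t, HasFirstEntry (Z i) t c)
    (D : ℤ) {κ : Type*} [Finite κ] (φ : ℤ → κ) :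
    ∃ x : Fin v → ℤ, (∀ j, 0 < x j) ∧ (∀ i, 0 < (Z *ᵥ x) i) ∧
      (∀ j j', φ (D * x j) = φ (D * x j')) ∧ ∀ i i', φ ((Z *ᵥ x) i) = φ ((Z *ᵥ x) i') := by
  -- The rows of `diagonal c` give `c * x j`, from which `D * x j` is recovered.
  let C := fromRows (diagonal fun _ : Fin v => c) Z
  have hC : ∀ i, ∃ t, HasFirstEntry (C i) t c := by
    rintro (j | i)
    · exact ⟨j, by simp [C], fun s hs => by simp [C, diagonal_apply_ne _ hs.ne']⟩
    · exact hZ i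
  obtain ⟨x, hx, k, hxk⟩ :=
    C.exists_pos_mono_mulVec_of_hasFirstEntry hc hC fun n => (φ (D * (n / c)), φ n)
  have hCx : C *ᵥ x = Sum.elim (fun j => c * x j) (Z *ᵥ x) := by
    ext (j | i) <;> simp [C]
  have hxφ : ∀ j, φ (D * x j) = k.1 := fun j => by
    simpa [hCx, Int.mul_ediv_cancel_left _ hc.ne'] using congrArg Prod.fst (hxk (.inl j)).2
  have hZxφ : ∀ i, φ ((Z *ᵥ x) i) = k.2 := fun i => by
    simpa [hCx] using congrArg Prod.snd (hxk (.inr i)).2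
  refine ⟨x, hx, fun i => by simpa [hCx] using (hxk (.inr i)).1, fun j j' => ?_, fun i i' => ?_⟩
  · rw [hxφ, hxφ]
  · rw [hZxφ, hZxφ]

theorem Matrix.exists_nat_smul_eq_map_intCast {m n : Type*} [Fintype m] [Fintype n]
    (A : Matrix m n ℚ) : ∃ D : ℕ, 0 < D ∧ ∃ Z : Matrix m n ℤ, Z.map (↑) = (D : ℚ) • A := by
  set D := ∏ i, ∏ j, (A i j).den
  have hdvd : ∀ i j, (A i j).den ∣ D := fun i j =>
    (Finset.dvd_prod_of_mem _ (Finset.mem_univ j)).trans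
      (Finset.dvd_prod_of_mem (fun i => ∏ j, (A i j).den) (Finset.mem_univ i))
  choose e he using hdvd
  refine ⟨D, Finset.prod_pos fun i _ => Finset.prod_pos fun j _ => (A i j).den_pos,
    of fun i j => e i j * (A i j).num, ?_⟩
  ext i j
  simp only [map_apply, of_apply, smul_apply, smul_eq_mul, he i j]
  push_cast
  rw [← Rat.den_mul_eq_num]
  ring

theorem Matrix.exists_hasFirstEntry_of_map_intCast {u v : ℕ} (hu : 0 < u)
    {A : Matrix (Fin u) (Fin v) ℚ} {c : ℚ} (hc : 0 < c)
    (hA : ∀ i, ∃ j, A i j = c ∧ ∀ j' < j, A i j' = 0)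
    {D : ℕ} (hD : 0 < D) {Z : Matrix (Fin u) (Fin v) ℤ} (hZ : Z.map (↑) = (D : ℚ) • A) :
    ∃ c₀ : ℤ, 0 < c₀ ∧ ∀ i, ∃ t, HasFirstEntry (Z i) t c₀ := by
  have hZA : ∀ i j, (Z i j : ℚ) = D * A i j := fun i j => congrFun₂ hZ i j
  obtain ⟨j₀, hj₀, -⟩ := hA ⟨0, hu⟩
  have hc₀ : (Z ⟨0, hu⟩ j₀ : ℚ) = D * c := by rw [hZA, hj₀]
  refine ⟨Z ⟨0, hu⟩ j₀, by exact_mod_cast hc₀ ▸ (by positivity : (0 : ℚ) < D * c),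
    fun i => ?_⟩
  obtain ⟨t, ht, hzero⟩ := hA i
  refine ⟨t, ?_, fun s hs => ?_⟩
  · exact Int.cast_injective (α := ℚ) (by rw [hZA, ht, hc₀])
  · exact Int.cast_injective (α := ℚ) (by rw [hZA, hzero s hs, mul_zero, Int.cast_zero])

theorem stmt_11_general (u v : ℕ) (hu : 0 < u) (A : Matrix (Fin u) (Fin v) ℚ) (c : ℚ) (hc : 0 < c)
    (hfirst : ∀ i, ∃ j, A i j = c ∧ ∀ j' < j, A i j' = 0) :
    DoublyIPR A := by
  intro r φ
  obtain ⟨D, hD, Z, hZ⟩ := A.exists_nat_smul_eq_map_intCast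
  obtain ⟨c₀, hc₀, hZfirst⟩ := exists_hasFirstEntry_of_map_intCast hu hc hfirst hD hZ
  obtain ⟨x, hx, hZx, hxφ, hZxφ⟩ :=
    Z.exists_doubly_mono_of_hasFirstEntry hc₀ hZfirst D fun n => φ n.toNat
  have hDx : ∀ j, (((D * x j).toNat : ℕ) : ℤ) = D * x j := fun j =>
    Int.toNat_of_nonneg (by have := hx j; positivity)
  refine ⟨fun j => (D * x j).toNat, fun j => Int.lt_toNat.mpr (by have := hx j; positivity),
    hxφ, fun i => ((Z *ᵥ x) i).toNat, fun i => Int.lt_toNat.mpr (hZx i), fun i => ?_, hZxφ⟩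
  calc (((Z *ᵥ x) i).toNat : ℚ) = ((Z *ᵥ x) i : ℚ) := by
        exact_mod_cast Int.toNat_of_nonneg (hZx i).le
    _ = (Z.map (↑) *ᵥ ((↑) ∘ x)) i := RingHom.map_mulVec (Int.castRingHom ℚ) Z x i
    _ = (A *ᵥ fun j => ((D * x j).toNat : ℚ)) i := by
      rw [hZ, smul_mulVec, ← mulVec_smul]
      congr
      funext j
      rw [Pi.smul_apply, Function.comp_apply, smul_eq_mul]
      exact_mod_cast (hDx j).symm

theorem stmt_11 (u v : ℕ) (hu : 0 < u) (hv : 0 < v) (A : Matrix (Fin u) (Fin v) ℚ)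
    (hrows : ∀ i, ∃ j, A i j ≠ 0) (c : ℚ) (hc : 0 < c)
    (hfirst : ∀ i, ∃ j, A i j = c ∧ ∀ j' < j, A i j' = 0) :
    DoublyIPR A :=
  stmt_11_general u v hu A c hc hfirst
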